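/- Let K be a field of characteristic zero, X a finite connected poset, and φ ∈ Δ(I(X,K)). Define c ∈ I(X,K) by c(x,y) = φ(e_y)(x,y) if x ∈ Min(X), y ∈ Max(X) and x < y, and c(x,y) = 0 otherwise. Then c ∈ Z([I(X,K),I(X,K)]), and for all x < y one has ad_c(e_{xy}) = 0 and ad_c(e_x) = φ(e_x)_J, the component of φ(e_x) in span{e_{uv} : u < v}. -/

import Mathlib

/-!
Evaluating the `1/2`-derivation identity entrywise on the brackets `⁅e_x, e_y⁆ = 0`,
`⁅e_x, e_{xy}⁆ = e_{xy}` and `⁅e_y, e_{xy}⁆ = -e_{xy}` shows that off the diagonal `φ(e_x)` is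
supported on row and column `x`, that `φ(e_u)(u,v) = -φ(e_v)(u,v)`, and that `φ(e_v)(u,v) = 0`
unless `u` is minimal and `v` maximal. Hence `c(u,v) = φ(e_v)(u,v) = -φ(e_u)(u,v)` for `u ≠ v`,
which is `ad_c e_x = φ(e_x)_J`. Being supported on `Min X × Max X`, `c` commutes with every
element of zero diagonal, and these are exactly the elements of `[I(X,K), I(X,K)]`.
-/

open scoped Classical

attribute [local instance 100] LieRing.ofAssociativeRing

noncomputable section

/-- A `1/2`-derivation of a Lie algebra `L` over `K`:
`φ ⁅a, b⁆ = (1/2) • (⁅φ a, b⁆ + ⁅a, φ b⁆)`. -/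
def IsHalfDerivation (K L : Type*) [Field K] [LieRing L] [LieAlgebra K L]
    (φ : L →ₗ[K] L) : Prop :=
  ∀ a b : L, φ ⁅a, b⁆ = (2⁻¹ : K) • (⁅φ a, b⁆ + ⁅a, φ b⁆)

/-- The derived subalgebra `[L, L]` (the span of all brackets), as a `K`-submodule. -/
def derivedSpan (K L : Type*) [Field K] [LieRing L] [LieAlgebra K L] : Submodule K L :=
  Submodule.span K {z : L | ∃ a b : L, z = ⁅a, b⁆}

/-- The standard basis element `e_{xy}` (for `x ≤ y`) of the incidence algebra. -/
def eI (K : Type*) {X : Type*} [Field K] [PartialOrder X] [DecidableEq X]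
    (x y : X) (h : x ≤ y) : IncidenceAlgebra K X :=
  ⟨fun u v => if x = u ∧ y = v then (1 : K) else 0, by
    intro u v huv
    show (if x = u ∧ y = v then (1 : K) else 0) = 0
    rw [if_neg]; rintro ⟨rfl, rfl⟩; exact huv h⟩

/-- A walk `u 0, u 1, …, u m` in a poset: consecutive vertices are comparable and
cover one another (`l(x,y) = 1`). -/
def IsWalkOn {X : Type*} [PartialOrder X] (u : ℕ → X) (m : ℕ) : Prop :=
  ∀ i < m, u i ⋖ u (i + 1) ∨ u (i + 1) ⋖ u i

/-- A poset is connected if any two of its elements are joined by a walk. -/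
def ConnectedPoset (X : Type*) [PartialOrder X] : Prop :=
  ∀ x y : X, ∃ (u : ℕ → X) (m : ℕ), IsWalkOn u m ∧ u 0 = x ∧ u m = y

open Finset IncidenceAlgebra

section Basis

variable {K X : Type*} [Field K] [PartialOrder X] [DecidableEq X]

lemma eI_apply (x y : X) (h : x ≤ y) (u v : X) :
    eI K x y h u v = if x = u ∧ y = v then (1 : K) else 0 := rfl

variable [LocallyFiniteOrder X]

lemma mul_eI_apply (f : IncidenceAlgebra K X) (x y : X) (h : x ≤ y) (u v : X) :
    (f * eI K x y h) u v = if y = v then f u x else 0 := by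
  rw [mul_apply, Finset.sum_eq_single x]
  · by_cases hyv : y = v <;> simp [eI_apply, hyv]
  · intro z _ hzx
    simp [eI_apply, Ne.symm hzx]
  · intro hx
    by_cases hyv : y = v
    · subst hyv
      rw [mem_Icc, not_and] at hx
      by_cases hux : u ≤ x
      · exact absurd h (hx hux)
      · simp [apply_eq_zero_of_not_le hux]
    · simp [eI_apply, hyv]

lemma eI_mul_apply (f : IncidenceAlgebra K X) (x y : X) (h : x ≤ y) (u v : X) :
    (eI K x y h * f) u v = if x = u then f y v else 0 := by
  rw [mul_apply, Finset.sum_eq_single y]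
  · by_cases hxu : x = u <;> simp [eI_apply, hxu]
  · intro z _ hzy
    simp [eI_apply, Ne.symm hzy]
  · intro hy
    by_cases hxu : x = u
    · subst hxu
      rw [mem_Icc, not_and] at hy
      simp [apply_eq_zero_of_not_le (hy h)]
    · simp [eI_apply, hxu]

lemma lie_eI_apply (f : IncidenceAlgebra K X) (x y : X) (h : x ≤ y) (u v : X) :
    ⁅f, eI K x y h⁆ u v = (if y = v then f u x else 0) - (if x = u then f y v else 0) := by
  rw [Ring.lie_def, IncidenceAlgebra.sub_apply, mul_eI_apply, eI_mul_apply]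

lemma eI_lie_apply (f : IncidenceAlgebra K X) (x y : X) (h : x ≤ y) (u v : X) :
    ⁅eI K x y h, f⁆ u v = (if x = u then f y v else 0) - (if y = v then f u x else 0) := by
  rw [Ring.lie_def, IncidenceAlgebra.sub_apply, mul_eI_apply, eI_mul_apply]

lemma lie_eI_self_eI_self (x y : X) :
    ⁅eI K x x le_rfl, eI K y y le_rfl⁆ = 0 := by
  ext u v _
  by_cases hxy : x = y
  · subst hxy
    rw [lie_self]
  · simp [eI_lie_apply, eI_apply, Ne.symm hxy]

lemma lie_eI_self_left {x y : X} (hxy : x < y) :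
    ⁅eI K x x le_rfl, eI K x y hxy.le⁆ = eI K x y hxy.le := by
  ext u v _
  rw [eI_lie_apply]
  simp only [eI_apply]
  grind

lemma lie_eI_self_right {x y : X} (hxy : x < y) :
    ⁅eI K y y le_rfl, eI K x y hxy.le⁆ = -eI K x y hxy.le := by
  ext u v _
  rw [eI_lie_apply, IncidenceAlgebra.neg_apply]
  simp only [eI_apply]
  grind

end Basis

namespace IncidenceAlgebra

lemma sum_apply {𝕜 α ι : Type*} [AddCommMonoid 𝕜] [LE α] (s : Finset ι)
    (f : ι → IncidenceAlgebra 𝕜 α) (u v : α) : (∑ i ∈ s, f i) u v = ∑ i ∈ s, f i u v := by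
  induction s using Finset.cons_induction with
  | empty => rfl
  | cons i s hi ih => rw [sum_cons, sum_cons, add_apply, ih]

variable {𝕜 α : Type*} [PartialOrder α] [LocallyFiniteOrder α] [DecidableEq α]

lemma lie_apply_self [CommRing 𝕜] (a b : IncidenceAlgebra 𝕜 α) (u : α) : ⁅a, b⁆ u u = 0 := by
  rw [Ring.lie_def, sub_apply, mul_apply, mul_apply, Icc_self, sum_singleton, sum_singleton,
    mul_comm, sub_self]

lemma lie_eq_zero_of_isMin_isMax [Ring 𝕜] {c f : IncidenceAlgebra 𝕜 α}
    (hc : ∀ u v, c u v ≠ 0 → IsMin u ∧ IsMax v) (hf : ∀ u, f u u = 0) : ⁅c, f⁆ = 0 := by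
  ext u v _
  rw [Ring.lie_def, sub_apply, mul_apply, mul_apply, ← sum_sub_distrib, zero_apply]
  refine sum_eq_zero fun z hz => ?_
  obtain ⟨huz, hzv⟩ := mem_Icc.mp hz
  have hleft : c u z * f z v = 0 := by
    by_cases hcuz : c u z = 0
    · rw [hcuz, zero_mul]
    · rw [(hc u z hcuz).2.eq_of_le hzv, hf, mul_zero]
  have hright : f u z * c z v = 0 := by
    by_cases hczv : c z v = 0
    · rw [hczv, mul_zero]
    · rw [(hc z v hczv).1.eq_of_ge huz, hf, zero_mul]
  rw [hleft, hright, sub_self]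

variable {K X : Type*} [Field K] [PartialOrder X] [LocallyFiniteOrder X] [DecidableEq X]

lemma eq_sum_lie_of_apply_self_eq_zero [Fintype X] {f : IncidenceAlgebra K X}
    (hf : ∀ u, f u u = 0) :
    f = ∑ x, ⁅eI K x x le_rfl, eI K x x le_rfl * f⁆ := by
  ext u v _
  simp only [sum_apply, eI_lie_apply, eI_mul_apply, sum_sub_distrib, if_true, sum_ite_eq',
    mem_univ]
  simp [hf]

lemma mem_derivedSpan_iff [Fintype X] {f : IncidenceAlgebra K X} :
    f ∈ derivedSpan K (IncidenceAlgebra K X) ↔ ∀ u, f u u = 0 := by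
  constructor
  · intro hf u
    induction hf using Submodule.span_induction with
    | mem z hz =>
      obtain ⟨a, b, rfl⟩ := hz
      exact lie_apply_self a b u
    | zero => rfl
    | add f g _ _ hf hg => rw [add_apply, hf, hg, add_zero]
    | smul r f _ hf => rw [constSMul_apply, hf, smul_zero]
  · intro hf
    rw [eq_sum_lie_of_apply_self_eq_zero hf]
    exact Submodule.sum_mem _ fun x _ => Submodule.subset_span ⟨_, _, rfl⟩

end IncidenceAlgebra

namespace IsHalfDerivation

variable {K X : Type*} [Field K] [NeZero (2 : K)] [PartialOrder X] [LocallyFiniteOrder X]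
  [DecidableEq X] {φ : IncidenceAlgebra K X →ₗ[K] IncidenceAlgebra K X}
  (hφ : IsHalfDerivation K (IncidenceAlgebra K X) φ)
include hφ

lemma two_mul_map_lie_apply (a b : IncidenceAlgebra K X) (u v : X) :
    2 * φ ⁅a, b⁆ u v = ⁅φ a, b⁆ u v + ⁅a, φ b⁆ u v := by
  rw [hφ a b, constSMul_apply, IncidenceAlgebra.add_apply, smul_eq_mul, ← mul_assoc,
    mul_inv_cancel₀ two_ne_zero, one_mul]

lemma map_eI_self_apply_eq_zero_of_ne {x u v : X} (hxu : x ≠ u) (hxv : x ≠ v) (huv : u ≠ v) :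
    φ (eI K x x le_rfl) u v = 0 := by
  have h := hφ.two_mul_map_lie_apply (eI K x x le_rfl) (eI K v v le_rfl) u v
  simpa [lie_eI_self_eI_self, lie_eI_apply, eI_lie_apply, hxu, hxv, Ne.symm huv] using h.symm

lemma map_eI_self_apply_add_map_eI_self_apply {u v : X} (huv : u ≠ v) :
    φ (eI K u u le_rfl) u v + φ (eI K v v le_rfl) u v = 0 := by
  have h := hφ.two_mul_map_lie_apply (eI K u u le_rfl) (eI K v v le_rfl) u v
  simpa [lie_eI_self_eI_self, lie_eI_apply, eI_lie_apply, huv, Ne.symm huv] using h.symm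

lemma map_eI_self_apply_eq_zero_of_not_isMax {u v : X} (huv : u < v) (hv : ¬IsMax v) :
    φ (eI K v v le_rfl) u v = 0 := by
  obtain ⟨w, hvw⟩ := not_isMax_iff.mp hv
  have hw : φ (eI K w w le_rfl) u v = 0 :=
    hφ.map_eI_self_apply_eq_zero_of_ne (huv.trans hvw).ne' hvw.ne' huv.ne
  have hleft := hφ.two_mul_map_lie_apply (eI K v v le_rfl) (eI K v w hvw.le) u w
  have hright := hφ.two_mul_map_lie_apply (eI K w w le_rfl) (eI K v w hvw.le) u w
  rw [lie_eI_self_left hvw] at hleft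
  rw [lie_eI_self_right hvw, map_neg] at hright
  simp only [lie_eI_apply, eI_lie_apply, huv.ne', (huv.trans hvw).ne', hvw.ne, hw, ↓reduceIte,
    IncidenceAlgebra.coe_neg, Pi.neg_apply, sub_zero, sub_self, zero_sub, add_zero, zero_add,
    mul_neg, neg_inj] at hleft hright
  linear_combination 2 * hright - hleft

lemma map_eI_self_apply_eq_zero_of_not_isMin {u v : X} (huv : u < v) (hu : ¬IsMin u) :
    φ (eI K v v le_rfl) u v = 0 := by
  obtain ⟨t, htu⟩ := not_isMin_iff.mp hu
  have ht : φ (eI K t t le_rfl) u v = 0 :=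
    hφ.map_eI_self_apply_eq_zero_of_ne htu.ne (htu.trans huv).ne huv.ne
  have hleft := hφ.two_mul_map_lie_apply (eI K t t le_rfl) (eI K t u htu.le) t v
  have hright := hφ.two_mul_map_lie_apply (eI K u u le_rfl) (eI K t u htu.le) t v
  rw [lie_eI_self_left htu] at hleft
  rw [lie_eI_self_right htu, map_neg] at hright
  simp only [lie_eI_apply, eI_lie_apply, huv.ne, (htu.trans huv).ne, htu.ne', ht, ↓reduceIte,
    IncidenceAlgebra.coe_neg, Pi.neg_apply, sub_zero, sub_self, zero_sub, add_zero, zero_add,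
    mul_neg, neg_inj] at hleft hright
  have hu : φ (eI K u u le_rfl) u v = 0 := by linear_combination 2 * hleft - hright
  linear_combination hφ.map_eI_self_apply_add_map_eI_self_apply huv.ne - hu

lemma map_eI_self_apply_eq_zero_of_not_isMin_isMax {u v : X} (huv : u < v)
    (h : ¬(IsMin u ∧ IsMax v)) : φ (eI K v v le_rfl) u v = 0 := by
  rw [not_and_or] at h
  rcases h with hu | hv
  · exact hφ.map_eI_self_apply_eq_zero_of_not_isMin huv hu
  · exact hφ.map_eI_self_apply_eq_zero_of_not_isMax huv hv

lemma lie_eI_self_apply {c : IncidenceAlgebra K X}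
    (hc : ∀ u v, u ≠ v → c u v = φ (eI K v v le_rfl) u v) (x u v : X) :
    ⁅c, eI K x x le_rfl⁆ u v = if u = v then 0 else φ (eI K x x le_rfl) u v := by
  rw [lie_eI_apply]
  by_cases huv : u = v
  · subst huv
    split_ifs <;> simp_all
  rw [if_neg huv]
  by_cases hxv : x = v
  · subst hxv
    simp [Ne.symm huv, hc u x huv]
  by_cases hxu : x = u
  · subst hxu
    simp only [hxv, hc x v huv, ↓reduceIte, zero_sub]
    linear_combination -hφ.map_eI_self_apply_add_map_eI_self_apply huv
  simp [hxu, hxv, hφ.map_eI_self_apply_eq_zero_of_ne hxu hxv huv]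

end IsHalfDerivation

theorem statement10_general (K X : Type*) [Field K] [CharZero K] [PartialOrder X] [Fintype X]
    [LocallyFiniteOrder X] [DecidableEq X]
    (φ : IncidenceAlgebra K X →ₗ[K] IncidenceAlgebra K X)
    (hφ : IsHalfDerivation K (IncidenceAlgebra K X) φ)
    (c : IncidenceAlgebra K X)
    (hc : ∀ x y : X, c x y =
      if IsMin x ∧ IsMax y ∧ x < y then φ (eI K y y le_rfl) x y else 0) :
    (c ∈ derivedSpan K (IncidenceAlgebra K X) ∧
      ∀ f ∈ derivedSpan K (IncidenceAlgebra K X), ⁅c, f⁆ = 0) ∧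
    (∀ (x y : X) (hxy : x < y), ⁅c, eI K x y hxy.le⁆ = 0) ∧
    (∀ x u v : X, ⁅c, eI K x x le_rfl⁆ u v =
      if u = v then 0 else φ (eI K x x le_rfl) u v) := by
  have hc_support : ∀ u v, c u v ≠ 0 → IsMin u ∧ IsMax v := fun u v h => by
    by_contra hnot
    exact h (by rw [hc, if_neg fun h' => hnot ⟨h'.1, h'.2.1⟩])
  have hc_off_diag : ∀ u v, u ≠ v → c u v = φ (eI K v v le_rfl) u v := fun u v huv => by
    rw [hc]
    split_ifs with h
    · rfl
    · by_cases hle : u ≤ v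
      · have hlt := hle.lt_of_ne huv
        exact (hφ.map_eI_self_apply_eq_zero_of_not_isMin_isMax hlt
          fun h' => h ⟨h'.1, h'.2, hlt⟩).symm
      · exact (apply_eq_zero_of_not_le hle _).symm
  have hcentral : ∀ f ∈ derivedSpan K (IncidenceAlgebra K X), ⁅c, f⁆ = 0 := fun f hf =>
    lie_eq_zero_of_isMin_isMax hc_support (mem_derivedSpan_iff.mp hf)
  refine ⟨⟨mem_derivedSpan_iff.mpr fun u => by simp [hc], hcentral⟩, fun x y hxy => ?_,
    hφ.lie_eI_self_apply hc_off_diag⟩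
  exact hcentral _ (mem_derivedSpan_iff.mpr fun u => if_neg fun h => hxy.ne (h.1.trans h.2.symm))

/-- let `c` be defined by `c(x,y) = φ(e_y)(x,y)` for `x ∈ Min X`,
`y ∈ Max X`, `x < y`, and `0` otherwise.  Then `c ∈ Z([I(X,K), I(X,K)])`,
`ad_c e_{xy} = 0` for `x < y`, and `ad_c e_x = (φ e_x)_J`. -/
theorem statement10 (K X : Type*) [Field K] [CharZero K] [PartialOrder X] [Fintype X]
    [LocallyFiniteOrder X] [DecidableEq X] (hconn : ConnectedPoset X)
    (φ : IncidenceAlgebra K X →ₗ[K] IncidenceAlgebra K X)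
    (hφ : IsHalfDerivation K (IncidenceAlgebra K X) φ)
    (c : IncidenceAlgebra K X)
    (hc : ∀ x y : X, c x y =
      if IsMin x ∧ IsMax y ∧ x < y then φ (eI K y y le_rfl) x y else 0) :
    (c ∈ derivedSpan K (IncidenceAlgebra K X) ∧
      ∀ f ∈ derivedSpan K (IncidenceAlgebra K X), ⁅c, f⁆ = 0) ∧
    (∀ (x y : X) (hxy : x < y), ⁅c, eI K x y hxy.le⁆ = 0) ∧
    (∀ x u v : X, ⁅c, eI K x x le_rfl⁆ u v =
      if u = v then 0 else φ (eI K x x le_rfl) u v) :=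
  statement10_general K X φ hφ c hc
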